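/- Let T = 2, σ(t,x) = (1−t)^β for t ∈ [0,1] and σ(t,x) = 0 for t ∈ (1,2], b ≡ 0, g(x) = x/|x|^α with α ∈ (0,1), and let u(t,x) = E[g(x + ∫_t^1 (1−s)^β dW_s)] for t ∈ [0,1]. Then u_x(t,0) = C_α σ₀^{−α} where σ₀² = (1−t)^{1+2β}/(1+2β) and C_α = (2π)^{-1/2} ∫_ℝ |y|^{2−α} e^{−y²/2} dy; in particular, if 0 < β < α/(2(1−α)), then (u_x σ)(t,0) = C_α (1+2β)^{α/2} (1−t)^{β(1−α)−α/2} → ∞ as t ↑ 1. -/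

import Mathlib

open MeasureTheory Real Set Filter


lemma aux_sign_meas : Measurable Real.sign := by
  unfold Real.sign
  exact Measurable.ite measurableSet_Iio measurable_const
    (Measurable.ite measurableSet_Ioi measurable_const measurable_const)

lemma aux_int (b : ℝ) (hb : 0 < b) :
    Integrable fun y : ℝ => (1 + |y|) ^ 2 * Real.exp (-b * y ^ 2) := by
  have h2 : Integrable fun y : ℝ => (2 : ℝ) * Real.exp (-b * y ^ 2) + 2 * (y ^ 2 * Real.exp (-b * y ^ 2)) := by
    apply ((integrable_exp_neg_mul_sq hb).const_mul 2).add
    have := integrable_rpow_mul_exp_neg_mul_sq hb (s := 2) (by norm_num)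
    simpa [Real.rpow_natCast] using this.const_mul 2
  apply h2.mono'
  · exact Continuous.aestronglyMeasurable (by continuity)
  · filter_upwards with y
    have h1 : (0:ℝ) < Real.exp (-b * y ^ 2) := Real.exp_pos _
    have h3 : (1 + |y|) ^ 2 ≤ 2 + 2 * y ^ 2 := by
      nlinarith [abs_nonneg y, sq_abs y, sq_nonneg (1 - |y|)]
    rw [Real.norm_eq_abs, abs_of_nonneg (by positivity)]
    nlinarith

lemma aux_g_abs_le (α y : ℝ) (hα : α ∈ Set.Ioo (0:ℝ) 1) :
    |Real.sign y * |y| ^ (1 - α)| ≤ 1 + |y| := by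
  have h1 : |Real.sign y| ≤ 1 := by
    rcases Real.sign_apply_eq y with h | h | h <;> rw [h] <;> norm_num
  have h2 : |y| ^ (1 - α) ≤ 1 + |y| := by
    rcases le_total (|y|) 1 with h | h
    · calc |y| ^ (1 - α) ≤ 1 ^ (1 - α) :=
            Real.rpow_le_rpow (abs_nonneg y) h (by linarith [hα.2])
        _ ≤ 1 + |y| := by rw [Real.one_rpow]; linarith [abs_nonneg y]
    · calc |y| ^ (1 - α) ≤ |y| ^ (1:ℝ) :=
            Real.rpow_le_rpow_of_exponent_le h (by linarith [hα.1])
        _ ≤ 1 + |y| := by rw [Real.rpow_one]; linarith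
  have h3 : (0:ℝ) ≤ |y| ^ (1 - α) := Real.rpow_nonneg (abs_nonneg y) _
  rw [abs_mul, abs_of_nonneg h3]
  calc |Real.sign y| * |y| ^ (1 - α) ≤ 1 * (1 + |y|) :=
        mul_le_mul h1 h2 h3 zero_le_one
    _ = 1 + |y| := one_mul _

lemma aux_g_mul (α y : ℝ) (hα : α ∈ Set.Ioo (0:ℝ) 1) :
    Real.sign y * |y| ^ (1 - α) * y = |y| ^ (2 - α) := by
  have hne : (2 - α : ℝ) ≠ 0 := by intro h; linarith [hα.2]
  rcases lt_trichotomy y 0 with h | rfl | h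
  · rw [Real.sign_of_neg h, abs_of_neg h]
    rw [show (2 - α : ℝ) = (1 - α) + 1 by ring, Real.rpow_add_one (by linarith)]
    ring
  · simp [Real.zero_rpow hne]
  · rw [Real.sign_of_pos h, abs_of_pos h]
    rw [show (2 - α : ℝ) = (1 - α) + 1 by ring, Real.rpow_add_one (by linarith)]
    ring

lemma key_hasDerivAt (α : ℝ) (hα : α ∈ Set.Ioo (0:ℝ) 1) (s : ℝ) (hs : 0 < s) :
    HasDerivAt (fun x => ∫ y : ℝ, (Real.sign y * |y| ^ (1 - α)) *
        ((Real.sqrt (2 * π * s ^ 2))⁻¹ * Real.exp (-(y - x) ^ 2 / (2 * s ^ 2))))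
      (((Real.sqrt (2 * π))⁻¹ * ∫ y : ℝ, |y| ^ (2 - α) * Real.exp (-y ^ 2 / 2)) * s ^ (-α)) 0 := by
  set c : ℝ := (Real.sqrt (2 * π * s ^ 2))⁻¹ with hc
  have hs2 : (0:ℝ) < 2 * s ^ 2 := by positivity
  have hgmeas : Measurable fun y : ℝ => Real.sign y * |y| ^ (1 - α) := by
    apply aux_sign_meas.mul
    exact Continuous.measurable (continuous_abs.rpow_const fun x => Or.inr (by linarith [hα.2]))
  set F : ℝ → ℝ → ℝ := fun x y => (Real.sign y * |y| ^ (1 - α)) *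
      (c * Real.exp (-(y - x) ^ 2 / (2 * s ^ 2))) with hF
  set F' : ℝ → ℝ → ℝ := fun x y => (Real.sign y * |y| ^ (1 - α)) *
      (c * (Real.exp (-(y - x) ^ 2 / (2 * s ^ 2)) * ((y - x) / s ^ 2))) with hF'
  set bound : ℝ → ℝ := fun y => (c * (s ^ 2)⁻¹ * Real.exp (1 / (2 * s ^ 2))) *
      ((1 + |y|) ^ 2 * Real.exp (-(1 / (4 * s ^ 2)) * y ^ 2)) with hbd
  have hcpos : 0 < c := by
    rw [hc]; exact inv_pos.2 (Real.sqrt_pos.2 (by positivity))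
  have hFmeas : ∀ x : ℝ, AEStronglyMeasurable (F x) volume := by
    intro x
    apply Measurable.aestronglyMeasurable
    exact hgmeas.mul (measurable_const.mul (by fun_prop))
  have hF'meas : AEStronglyMeasurable (F' 0) volume := by
    apply Measurable.aestronglyMeasurable
    exact hgmeas.mul (measurable_const.mul (Measurable.mul (by fun_prop) (by fun_prop)))
  have hFint : Integrable (F 0) volume := by
    apply ((aux_int (1/(2*s^2)) (by positivity)).const_mul c).mono' (hFmeas 0)
    filter_upwards with y
    have h1 := aux_g_abs_le α y hα
    have h2 : Real.exp (-(y - 0) ^ 2 / (2 * s ^ 2)) ≤ Real.exp (-(1/(2*s^2)) * y ^ 2) :=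
      le_of_eq (by rw [sub_zero]; ring_nf)
    have h3 : (1:ℝ) + |y| ≤ (1 + |y|)^2 := by nlinarith [abs_nonneg y]
    have heq : |c * Real.exp (-(y - 0) ^ 2 / (2 * s ^ 2))| = c * Real.exp (-(y - 0) ^ 2 / (2 * s ^ 2)) :=
      abs_of_pos (by positivity)
    rw [Real.norm_eq_abs, hF]
    rw [abs_mul, heq]
    calc |Real.sign y * |y| ^ (1 - α)| * (c * Real.exp (-(y - 0) ^ 2 / (2 * s ^ 2)))
        ≤ (1 + |y|)^2 * (c * Real.exp (-(1/(2*s^2)) * y ^ 2)) := by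
          apply mul_le_mul (h1.trans h3) _ (by positivity) (by positivity)
          exact mul_le_mul_of_nonneg_left h2 hcpos.le
      _ = c * ((1 + |y|) ^ 2 * Real.exp (-(1/(2*s^2)) * y ^ 2)) := by ring
  have hbound_int : Integrable bound volume :=
    (aux_int (1/(4*s^2)) (by positivity)).const_mul _
  have h_bound : ∀ᵐ y : ℝ, ∀ x ∈ Metric.ball (0:ℝ) 1, ‖F' x y‖ ≤ bound y := by
    filter_upwards with y x hx
    rw [mem_ball_zero_iff, Real.norm_eq_abs] at hx
    have h1 := aux_g_abs_le α y hα
    have h2 : Real.exp (-(y - x) ^ 2 / (2 * s ^ 2)) ≤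
        Real.exp (1 / (2 * s ^ 2)) * Real.exp (-(1/(4*s^2)) * y ^ 2) := by
      rw [← Real.exp_add]
      apply Real.exp_le_exp.2
      rw [div_le_iff₀ hs2, add_mul]
      have hx2 : x ^ 2 ≤ 1 := by nlinarith [abs_nonneg x, sq_abs x]
      have hq : y ^ 2 / 2 - 1 ≤ (y - x) ^ 2 := by nlinarith [sq_nonneg (y - 2*x)]
      have h4 : -(1 / (4 * s ^ 2)) * y ^ 2 * (2 * s ^ 2) = -(y^2/2) := by field_simp; ring
      have h5 : (1:ℝ) / (2 * s ^ 2) * (2 * s ^ 2) = 1 := by field_simp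
      rw [h4, h5]
      linarith
    have h3 : |y - x| ≤ 1 + |y| := by
      calc |y - x| ≤ |y| + |x| := abs_sub _ _
        _ ≤ 1 + |y| := by linarith
    have heq : |c * (Real.exp (-(y - x) ^ 2 / (2 * s ^ 2)) * ((y - x) / s ^ 2))|
        = c * (Real.exp (-(y - x) ^ 2 / (2 * s ^ 2)) * (|y - x| / s ^ 2)) := by
      rw [abs_mul, abs_mul, abs_div, abs_of_pos hcpos, abs_of_pos (Real.exp_pos _),
        abs_of_pos (by positivity : (0:ℝ) < s ^ 2)]
    rw [hF', Real.norm_eq_abs, abs_mul, heq]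
    calc |Real.sign y * |y| ^ (1 - α)| * (c * (Real.exp (-(y - x) ^ 2 / (2 * s ^ 2)) * (|y - x| / s ^ 2)))
        ≤ (1 + |y|) * (c * ((Real.exp (1 / (2 * s ^ 2)) * Real.exp (-(1/(4*s^2)) * y ^ 2)) * ((1 + |y|) / s ^ 2))) := by
          apply mul_le_mul h1 _ (by positivity) (by positivity)
          apply mul_le_mul_of_nonneg_left _ hcpos.le
          apply mul_le_mul h2 (div_le_div_of_nonneg_right h3 (by positivity)) (by positivity) (by positivity)
      _ = bound y := by rw [hbd]; ring
  have h_diff : ∀ᵐ y : ℝ, ∀ x ∈ Metric.ball (0:ℝ) 1, HasDerivAt (fun x => F x y) (F' x y) x := by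
    filter_upwards with y x _
    have h1 : HasDerivAt (fun x : ℝ => -(y - x) ^ 2 / (2 * s ^ 2)) ((y - x) / s ^ 2) x := by
      have := (((hasDerivAt_id x).const_sub y).pow 2).neg.div_const (2 * s ^ 2)
      refine this.congr_deriv ?_
      simp only [id, Nat.cast_ofNat]
      ring
    exact ((h1.exp.const_mul c).const_mul _).congr_deriv (by ring)
  have main := hasDerivAt_integral_of_dominated_loc_of_deriv_le (Metric.ball_mem_nhds (0:ℝ) one_pos)
    (Filter.Eventually.of_forall fun x => hFmeas x) hFint hF'meas h_bound hbound_int h_diff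
  have hsqrt : Real.sqrt (2 * π * s ^ 2) = Real.sqrt (2 * π) * s := by
    rw [Real.sqrt_mul (by positivity), Real.sqrt_sq hs.le]
  have h2π : (0:ℝ) < Real.sqrt (2 * π) := Real.sqrt_pos.2 (by positivity)
  have hspow : s ^ ((2:ℝ) - α) = s ^ (-α) * s ^ (2:ℕ) := by
    rw [show (2 - α : ℝ) = -α + 2 by ring, Real.rpow_add hs]
    norm_num [Real.rpow_natCast]
  have hval : (∫ y : ℝ, F' 0 y) =
      ((Real.sqrt (2 * π))⁻¹ * ∫ y : ℝ, |y| ^ (2 - α) * Real.exp (-y ^ 2 / 2)) * s ^ (-α) := by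
    have hrw : (fun y : ℝ => F' 0 y) = fun y : ℝ =>
        (c / s ^ 2) * (|y| ^ (2 - α) * Real.exp (-y ^ 2 / (2 * s ^ 2))) := by
      funext y
      rw [hF']
      simp only [sub_zero]
      rw [← aux_g_mul α y hα]
      ring
    have hcv : (∫ y : ℝ, |y| ^ (2 - α) * Real.exp (-y ^ 2 / (2 * s ^ 2)))
        = s * (s ^ ((2:ℝ)-α) * ∫ z : ℝ, |z| ^ (2 - α) * Real.exp (-z ^ 2 / 2)) := by
      have h := MeasureTheory.Measure.integral_comp_mul_left
        (fun y : ℝ => |y| ^ (2 - α) * Real.exp (-y ^ 2 / (2 * s ^ 2))) s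
      have hfe : (fun x : ℝ => |s * x| ^ (2 - α) * Real.exp (-(s * x) ^ 2 / (2 * s ^ 2)))
          = fun x : ℝ => s ^ ((2:ℝ)-α) * (|x| ^ (2 - α) * Real.exp (-x ^ 2 / 2)) := by
        funext x
        rw [abs_mul, abs_of_pos hs, Real.mul_rpow hs.le (abs_nonneg x)]
        have : -(s * x) ^ 2 / (2 * s ^ 2) = -x ^ 2 / 2 := by
          field_simp
        rw [this]; ring
      rw [hfe] at h
      rw [MeasureTheory.integral_const_mul] at h
      rw [smul_eq_mul, abs_inv, abs_of_pos hs] at h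
      rw [h, ← mul_assoc, mul_inv_cancel₀ hs.ne', one_mul]
    rw [hrw, MeasureTheory.integral_const_mul, hcv, hc, hsqrt, hspow]
    have hsne : s ≠ 0 := hs.ne'
    field_simp
  rw [← hval]
  exact main.2

lemma aux_alg (α β τ : ℝ) (hα : α ∈ Set.Ioo (0:ℝ) 1) (hβ : 0 < β) (hτ : 0 < τ) :
    Real.sqrt (τ ^ (1 + 2 * β) / (1 + 2 * β)) ^ (-α) * τ ^ β
      = (1 + 2 * β) ^ (α / 2) * τ ^ (β * (1 - α) - α / 2) := by
  have hb1 : (0:ℝ) < 1 + 2 * β := by linarith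
  have hA : (0:ℝ) < τ ^ (1 + 2 * β) / (1 + 2 * β) :=
    div_pos (Real.rpow_pos_of_pos hτ _) hb1
  rw [Real.sqrt_eq_rpow, ← Real.rpow_mul hA.le]
  rw [show (1 / 2 : ℝ) * -α = -(α / 2) by ring]
  rw [Real.div_rpow (Real.rpow_pos_of_pos hτ _).le hb1.le]
  rw [← Real.rpow_mul hτ.le]
  rw [Real.rpow_neg hb1.le]
  rw [div_eq_mul_inv, inv_inv]
  rw [show β * (1 - α) - α / 2 = (1 + 2 * β) * -(α / 2) + β by ring, Real.rpow_add hτ]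
  ring

lemma aux_int2 (α : ℝ) (hα : α ∈ Set.Ioo (0:ℝ) 1) :
    Integrable fun y : ℝ => |y| ^ (2 - α) * Real.exp (-y ^ 2 / 2) := by
  apply (aux_int (1/2) (by norm_num)).mono'
  · exact Continuous.aestronglyMeasurable
      ((continuous_abs.rpow_const fun x => Or.inr (by linarith [hα.2])).mul (by continuity))
  · filter_upwards with y
    rw [Real.norm_eq_abs, abs_of_nonneg (by positivity)]
    have h2 : |y| ^ (2 - α) ≤ (1 + |y|) ^ 2 := by
      rcases le_total (|y|) 1 with h | h
      · calc |y| ^ (2 - α) ≤ 1 ^ (2 - α) :=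
              Real.rpow_le_rpow (abs_nonneg y) h (by linarith [hα.2])
          _ = 1 := Real.one_rpow _
          _ ≤ (1 + |y|) ^ 2 := by nlinarith [abs_nonneg y]
      · calc |y| ^ (2 - α) ≤ |y| ^ (2:ℝ) :=
              Real.rpow_le_rpow_of_exponent_le h (by linarith [hα.1])
          _ = |y| ^ (2:ℕ) := by
              rw [show ((2:ℝ)) = ((2:ℕ):ℝ) by norm_num, Real.rpow_natCast]
          _ ≤ (1 + |y|) ^ 2 := by nlinarith [abs_nonneg y]
    have he : Real.exp (-y ^ 2 / 2) = Real.exp (-(1/2) * y ^ 2) := by ring_nf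
    rw [he]
    exact mul_le_mul_of_nonneg_right h2 (Real.exp_pos _).le

lemma aux_Cpos (α : ℝ) (hα : α ∈ Set.Ioo (0:ℝ) 1) :
    0 < (Real.sqrt (2 * π))⁻¹ * ∫ y : ℝ, |y| ^ (2 - α) * Real.exp (-y ^ 2 / 2) := by
  have hπ := Real.pi_pos
  apply mul_pos (inv_pos.2 (Real.sqrt_pos.2 (by positivity)))
  rw [integral_pos_iff_support_of_nonneg (fun y => by positivity) (aux_int2 α hα)]
  have hsub : Set.Ioi (0:ℝ) ⊆
      Function.support (fun y : ℝ => |y| ^ (2 - α) * Real.exp (-y ^ 2 / 2)) := by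
    intro y hy
    have h0 : 0 < |y| ^ (2 - α) * Real.exp (-y ^ 2 / 2) :=
      mul_pos (Real.rpow_pos_of_pos (abs_pos.2 (ne_of_gt hy)) _) (Real.exp_pos _)
    exact Function.mem_support.2 (ne_of_gt h0)
  calc (0:ENNReal) < volume (Set.Ioi (0:ℝ)) := by rw [Real.volume_Ioi]; simp
    _ ≤ _ := measure_mono hsub


/-- Example 1: with `T = 2`, `b ≡ 0`, `σ(t,x) = (1−t)^β` on `[0,1]` (and `0` afterwards),
`g(x) = x/|x|^α = sign(x)|x|^{1−α}` for `α ∈ (0,1)`, and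
`u(t,x) = E[g(x + ∫_t^1 (1−s)^β dW_s)]` the Gaussian convolution with variance
`σ₀² = (1−t)^{1+2β}/(1+2β)`, one has `u_x(t,0) = C_α σ₀^{−α}` with
`C_α = (2π)^{−1/2} ∫_ℝ |y|^{2−α} e^{−y²/2} dy`; in particular, if `0 < β < α/(2(1−α))` then
`(u_x σ)(t,0) = C_α (1+2β)^{α/2} (1−t)^{β(1−α)−α/2} → ∞` as `t ↑ 1`. -/
theorem digital_option_Z_blowup
    (α β : ℝ) (hα : α ∈ Ioo (0 : ℝ) 1) (hβ : 0 < β)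
    (g : ℝ → ℝ) (hg : ∀ x, g x = Real.sign x * |x| ^ (1 - α))
    (σ₀ : ℝ → ℝ) (hσ₀ : ∀ t, σ₀ t = Real.sqrt ((1 - t) ^ (1 + 2 * β) / (1 + 2 * β)))
    (u : ℝ → ℝ → ℝ)
    (hu : ∀ t ∈ Ico (0 : ℝ) 1, ∀ x : ℝ,
      u t x = ∫ y : ℝ, g y *
        ((Real.sqrt (2 * π * (σ₀ t) ^ 2))⁻¹ * Real.exp (-(y - x) ^ 2 / (2 * (σ₀ t) ^ 2))))
    (Cα : ℝ) (hCα : Cα = (Real.sqrt (2 * π))⁻¹ * ∫ y : ℝ, |y| ^ (2 - α) * Real.exp (-y ^ 2 / 2)) :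
    (∀ t ∈ Ico (0 : ℝ) 1, deriv (fun x => u t x) 0 = Cα * (σ₀ t) ^ (-α)) ∧
    (β < α / (2 * (1 - α)) →
      (∀ t ∈ Ico (0 : ℝ) 1,
        deriv (fun x => u t x) 0 * (1 - t) ^ β
          = Cα * (1 + 2 * β) ^ (α / 2) * (1 - t) ^ (β * (1 - α) - α / 2)) ∧
      Tendsto (fun t => deriv (fun x => u t x) 0 * (1 - t) ^ β)
        (nhdsWithin 1 (Iio (1 : ℝ))) atTop) := by
  have hb1 : (0:ℝ) < 1 + 2 * β := by linarith
  have part1 : ∀ t ∈ Ico (0 : ℝ) 1, deriv (fun x => u t x) 0 = Cα * (σ₀ t) ^ (-α) := by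
    intro t ht
    have ht1 : (0:ℝ) < 1 - t := by linarith [ht.2]
    have hspos : 0 < σ₀ t := by
      rw [hσ₀]
      exact Real.sqrt_pos.2 (div_pos (Real.rpow_pos_of_pos ht1 _) hb1)
    have hfun : (fun x => u t x) = fun x => ∫ y : ℝ, (Real.sign y * |y| ^ (1 - α)) *
        ((Real.sqrt (2 * π * (σ₀ t) ^ 2))⁻¹ *
          Real.exp (-(y - x) ^ 2 / (2 * (σ₀ t) ^ 2))) := by
      funext x
      rw [hu t ht x]
      simp only [hg]
    rw [hfun, hCα]
    exact (key_hasDerivAt α hα (σ₀ t) hspos).deriv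
  refine ⟨part1, fun hβα => ?_⟩
  have part2a : ∀ t ∈ Ico (0 : ℝ) 1,
      deriv (fun x => u t x) 0 * (1 - t) ^ β
        = Cα * (1 + 2 * β) ^ (α / 2) * (1 - t) ^ (β * (1 - α) - α / 2) := by
    intro t ht
    have ht1 : (0:ℝ) < 1 - t := by linarith [ht.2]
    rw [part1 t ht, hσ₀, mul_assoc, aux_alg α β (1 - t) hα hβ ht1, mul_assoc]
  refine ⟨part2a, ?_⟩
  have hCαpos : 0 < Cα := by rw [hCα]; exact aux_Cpos α hα
  have hC : 0 < Cα * (1 + 2 * β) ^ (α / 2) :=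
    mul_pos hCαpos (Real.rpow_pos_of_pos hb1 _)
  have he : β * (1 - α) - α / 2 < 0 := by
    have h := (lt_div_iff₀ (by nlinarith [hα.2] : (0:ℝ) < 2 * (1 - α))).1 hβα
    nlinarith
  have h1 : Tendsto (fun t : ℝ => 1 - t) (nhdsWithin 1 (Iio (1:ℝ))) (nhdsWithin 0 (Ioi (0:ℝ))) := by
    apply tendsto_nhdsWithin_of_tendsto_nhds_of_eventually_within
    · have hcont : Continuous (fun t : ℝ => 1 - t) := by continuity
      have h0 : Tendsto (fun t : ℝ => 1 - t) (nhds 1) (nhds 0) := by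
        simpa using hcont.tendsto 1
      exact h0.mono_left nhdsWithin_le_nhds
    · filter_upwards [self_mem_nhdsWithin] with t ht
      exact sub_pos.2 (mem_Iio.1 ht)
  have h2 : Tendsto (fun x : ℝ => x ^ (β * (1 - α) - α / 2)) (nhdsWithin 0 (Ioi (0:ℝ))) atTop := by
    have h3 := (tendsto_rpow_atTop (show (0:ℝ) < -(β * (1 - α) - α / 2) by linarith)).comp
      tendsto_inv_nhdsGT_zero
    apply h3.congr'
    filter_upwards [self_mem_nhdsWithin] with x hx
    simp only [Function.comp]
    rw [Real.inv_rpow (le_of_lt hx), Real.rpow_neg (le_of_lt hx), inv_inv]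
  have htend : Tendsto (fun t : ℝ => Cα * (1 + 2 * β) ^ (α / 2) *
      (1 - t) ^ (β * (1 - α) - α / 2)) (nhdsWithin 1 (Iio (1:ℝ))) atTop :=
    (h2.comp h1).const_mul_atTop hC
  have hev : (fun t : ℝ => Cα * (1 + 2 * β) ^ (α / 2) * (1 - t) ^ (β * (1 - α) - α / 2))
      =ᶠ[nhdsWithin 1 (Iio (1:ℝ))]
      fun t => deriv (fun x => u t x) 0 * (1 - t) ^ β := by
    filter_upwards [Ioo_mem_nhdsLT_of_mem (show (1:ℝ) ∈ Ioc (0:ℝ) 1 by constructor <;> norm_num)]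
      with t ht
    exact (part2a t ⟨ht.1.le, ht.2⟩).symm
  exact Tendsto.congr' hev htend
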